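/- arXiv:1301.1058 — 4 statements merged into one kernel-verified Lean document; each statement's English description precedes it below -/
import Mathlib

section
/- Let A₀, A₁ ∈ ℝ^{m×n} both have rank at most r, with factorizations A₀ = U₀ S₀ V₀ᵀ and A₁ = Û Ŝ V̂ᵀ, where U₀, Û ∈ ℝ^{m×r} and V₀, V̂ ∈ ℝ^{n×r} have orthonormal columns and S₀, Ŝ ∈ ℝ^{r×r}. Assume V̂ᵀ V₀ is invertible. Let ΔA = A₁ − A₀, and suppose U₁ ∈ ℝ^{m×r} has orthonormal columns and Ŝ₁ ∈ ℝ^{r×r} satisfy U₁ Ŝ₁ = U₀ S₀ + ΔA V₀. Then U₁ U₁ᵀ A₁ = A₁, i.e., the range of A₁ is contained in the range of U₁. -/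
open Matrix

theorem range_containment_step {m n r : ℕ}
    (A₀ A₁ : Matrix (Fin m) (Fin n) ℝ)
    (hr₀ : A₀.rank ≤ r) (hr₁ : A₁.rank ≤ r)
    (U₀ Uh U₁ : Matrix (Fin m) (Fin r) ℝ)
    (V₀ Vh : Matrix (Fin n) (Fin r) ℝ)
    (S₀ Sh Sh₁ : Matrix (Fin r) (Fin r) ℝ)
    (hU₀ : U₀ᵀ * U₀ = 1) (hUh : Uhᵀ * Uh = 1) (hU₁ : U₁ᵀ * U₁ = 1)
    (hV₀ : V₀ᵀ * V₀ = 1) (hVh : Vhᵀ * Vh = 1)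
    (hA₀ : A₀ = U₀ * S₀ * V₀ᵀ) (hA₁ : A₁ = Uh * Sh * Vhᵀ)
    (hinv : IsUnit (Vhᵀ * V₀))
    (hK : U₁ * Sh₁ = U₀ * S₀ + (A₁ - A₀) * V₀) :
    U₁ * U₁ᵀ * A₁ = A₁ := by
  obtain ⟨u, hu⟩ := hinv
  have hMN : (Vhᵀ * V₀) * (↑u⁻¹ : Matrix (Fin r) (Fin r) ℝ) = 1 := by
    rw [← hu]; exact u.mul_inv
  have h1 : U₁ * Sh₁ = Uh * Sh * (Vhᵀ * V₀) := by
    rw [hK, hA₀, hA₁, Matrix.sub_mul,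
      Matrix.mul_assoc (U₀ * S₀) V₀ᵀ V₀, hV₀, Matrix.mul_one,
      Matrix.mul_assoc (Uh * Sh) Vhᵀ V₀]
    abel
  have h2 : Uh * Sh = U₁ * Sh₁ * (↑u⁻¹ : Matrix (Fin r) (Fin r) ℝ) := by
    rw [h1, Matrix.mul_assoc, hMN, Matrix.mul_one]
  have hA₁' : A₁ = U₁ * (Sh₁ * (↑u⁻¹ : Matrix (Fin r) (Fin r) ℝ) * Vhᵀ) := by
    rw [hA₁, h2, Matrix.mul_assoc, Matrix.mul_assoc, Matrix.mul_assoc]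
  rw [hA₁', Matrix.mul_assoc U₁ U₁ᵀ, ← Matrix.mul_assoc U₁ᵀ U₁, hU₁,
    Matrix.one_mul]
end

section
/- Let A₀, A₁ ∈ ℝ^{m×n}, ΔA = A₁ − A₀. Let U₀, U₁ ∈ ℝ^{m×r} and V₀ ∈ ℝ^{n×r} have orthonormal columns and S₀ ∈ ℝ^{r×r}. Suppose: (i) A₀ = U₀ S₀ V₀ᵀ, (ii) U₁ Ŝ₁ = U₀ S₀ + ΔA V₀ for some Ŝ₁ ∈ ℝ^{r×r}, (iii) U₁ U₁ᵀ A₁ = A₁. Define S̃₀ = Ŝ₁ − U₁ᵀ ΔA V₀ and L₁ = V₀ S̃₀ᵀ + ΔAᵀ U₁, and set Y₁ = U₁ L₁ᵀ. Then Y₁ = A₁. -/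
open Matrix

theorem ksl_step_exact {m n r : ℕ}
    (A₀ A₁ : Matrix (Fin m) (Fin n) ℝ)
    (U₀ U₁ : Matrix (Fin m) (Fin r) ℝ) (V₀ : Matrix (Fin n) (Fin r) ℝ)
    (S₀ Sh₁ : Matrix (Fin r) (Fin r) ℝ)
    (hU₀ : U₀ᵀ * U₀ = 1) (hU₁ : U₁ᵀ * U₁ = 1) (hV₀ : V₀ᵀ * V₀ = 1)
    (hA₀ : A₀ = U₀ * S₀ * V₀ᵀ)
    (hK : U₁ * Sh₁ = U₀ * S₀ + (A₁ - A₀) * V₀)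
    (hrange : U₁ * U₁ᵀ * A₁ = A₁) :
    U₁ * (V₀ * (Sh₁ - U₁ᵀ * (A₁ - A₀) * V₀)ᵀ + (A₁ - A₀)ᵀ * U₁)ᵀ = A₁ := by
  have hAV : A₀ * V₀ * V₀ᵀ = A₀ := by
    rw [hA₀]
    calc U₀ * S₀ * V₀ᵀ * V₀ * V₀ᵀ = U₀ * S₀ * (V₀ᵀ * V₀) * V₀ᵀ := by
          simp only [Matrix.mul_assoc]
      _ = U₀ * S₀ * V₀ᵀ := by rw [hV₀, Matrix.mul_one]
  have hKV : U₁ * Sh₁ * V₀ᵀ = A₀ + (A₁ - A₀) * V₀ * V₀ᵀ := by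
    rw [hK, Matrix.add_mul, ← hA₀]
  -- expand LHS
  have expand : U₁ * (V₀ * (Sh₁ - U₁ᵀ * (A₁ - A₀) * V₀)ᵀ + (A₁ - A₀)ᵀ * U₁)ᵀ
      = U₁ * Sh₁ * V₀ᵀ - U₁ * U₁ᵀ * ((A₁ - A₀) * V₀ * V₀ᵀ) + U₁ * U₁ᵀ * (A₁ - A₀) := by
    simp only [Matrix.transpose_add, Matrix.transpose_sub, Matrix.transpose_mul,
      Matrix.transpose_transpose, Matrix.mul_add, Matrix.mul_sub, Matrix.sub_mul,
      Matrix.add_mul, Matrix.mul_assoc]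
  rw [expand]
  have h1 : U₁ * U₁ᵀ * (A₁ * V₀ * V₀ᵀ) = A₁ * V₀ * V₀ᵀ := by
    calc U₁ * U₁ᵀ * (A₁ * V₀ * V₀ᵀ) = U₁ * U₁ᵀ * A₁ * V₀ * V₀ᵀ := by
          simp only [Matrix.mul_assoc]
      _ = A₁ * V₀ * V₀ᵀ := by rw [hrange]
  have hUUA : U₁ * U₁ᵀ * ((A₁ - A₀) * V₀ * V₀ᵀ) = A₁ * V₀ * V₀ᵀ - U₁ * U₁ᵀ * A₀ := by
    simp only [Matrix.sub_mul, Matrix.mul_sub, hAV, h1]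
  have hUUA' : U₁ * U₁ᵀ * (A₁ - A₀) = A₁ - U₁ * U₁ᵀ * A₀ := by
    rw [Matrix.mul_sub, hrange]
  rw [hUUA, hUUA', hKV]
  have : (A₁ - A₀) * V₀ * V₀ᵀ = A₁ * V₀ * V₀ᵀ - A₀ := by
    simp only [Matrix.sub_mul, hAV]
  rw [this]
  abel
end

section
/- Let A : [t₀, t₁] → ℝ^{m×n} be continuously differentiable, and let V₀ ∈ ℝ^{n×r} have orthonormal columns. If Y : [t₀, t₁] → ℝ^{m×n} is defined by Y(t) = Y₀ + (A(t) − A(t₀)) V₀ V₀ᵀ with Y₀ V₀ V₀ᵀ = Y₀, then Y satisfies the differential equation Y'(t) = A'(t) V₀ V₀ᵀ with Y(t₀) = Y₀, and Y(t) V₀ V₀ᵀ = Y(t) for all t. -/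
open Matrix

attribute [local instance] Matrix.frobeniusNormedAddCommGroup Matrix.frobeniusNormedSpace

theorem first_split_substep_exact_solution {m n r : ℕ}
    (t₀ t₁ : ℝ)
    (A A' : ℝ → Matrix (Fin m) (Fin n) ℝ)
    (hA : ∀ t ∈ Set.Icc t₀ t₁, HasDerivWithinAt A (A' t) (Set.Icc t₀ t₁) t)
    (hA' : ContinuousOn A' (Set.Icc t₀ t₁))
    (V₀ : Matrix (Fin n) (Fin r) ℝ) (hV₀ : V₀ᵀ * V₀ = 1)
    (Y₀ : Matrix (Fin m) (Fin n) ℝ) (hY₀ : Y₀ * (V₀ * V₀ᵀ) = Y₀)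
    (Y : ℝ → Matrix (Fin m) (Fin n) ℝ)
    (hY : ∀ t, Y t = Y₀ + (A t - A t₀) * (V₀ * V₀ᵀ)) :
    (∀ t ∈ Set.Icc t₀ t₁, HasDerivWithinAt Y (A' t * (V₀ * V₀ᵀ)) (Set.Icc t₀ t₁) t) ∧
    Y t₀ = Y₀ ∧
    (∀ t, Y t * (V₀ * V₀ᵀ) = Y t) := by
  have hfun : Y = fun t => Y₀ + (A t - A t₀) * (V₀ * V₀ᵀ) := funext hY
  set P := V₀ * V₀ᵀ with hP
  have hPP : P * P = P := by
    rw [hP, Matrix.mul_assoc, ← Matrix.mul_assoc V₀ᵀ, hV₀, Matrix.one_mul]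
  -- right multiplication by P as a continuous linear map
  let L : Matrix (Fin m) (Fin n) ℝ →ₗ[ℝ] Matrix (Fin m) (Fin n) ℝ :=
    { toFun := fun X => X * P
      map_add' := fun X Y => Matrix.add_mul X Y P
      map_smul' := fun c X => Matrix.smul_mul c X P }
  let Lc := LinearMap.toContinuousLinearMap L
  refine ⟨?_, ?_, ?_⟩
  · intro t ht
    have h1 : HasDerivWithinAt (fun s => A s - A t₀) (A' t) (Set.Icc t₀ t₁) t :=
      (hA t ht).sub_const _
    have h2 := Lc.hasFDerivAt.comp_hasDerivWithinAt t h1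
    have h3 : HasDerivWithinAt (fun s => Y₀ + (A s - A t₀) * P) (0 + Lc (A' t))
        (Set.Icc t₀ t₁) t := (hasDerivWithinAt_const t (Set.Icc t₀ t₁) Y₀).add h2
    rw [hfun]
    have : (0 : Matrix (Fin m) (Fin n) ℝ) + Lc (A' t) = A' t * P := by
      simp [Lc, L]
    rwa [this] at h3
  · rw [hY t₀]; simp
  · intro t
    rw [hY t, Matrix.add_mul, hY₀, Matrix.mul_assoc, hPP]
end

section
/- Let A₀, A₁ ∈ ℝ^{m×n}, let U₀, U₁ ∈ ℝ^{m×r}, V₀, V₁ ∈ ℝ^{n×r} have orthonormal columns, and S₀, Ŝ₁, S̃₀, S₁ ∈ ℝ^{r×r}. Suppose the KSL step relations hold: U₁ Ŝ₁ = U₀ S₀ + (A₁−A₀) V₀, S̃₀ = Ŝ₁ − U₁ᵀ(A₁−A₀)V₀, and V₁ S₁ᵀ = V₀ S̃₀ᵀ + (A₁−A₀)ᵀ U₁. Then U₁ S₁ V₁ᵀ = U₀ S₀ V₀ᵀ + (A₁−A₀) V₀ V₀ᵀ − U₁ U₁ᵀ (A₁−A₀) V₀ V₀ᵀ + U₁ U₁ᵀ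 (A₁−A₀). -/
open Matrix

theorem ksl_step_identity {m n r : ℕ}
    (A₀ A₁ : Matrix (Fin m) (Fin n) ℝ)
    (U₀ U₁ : Matrix (Fin m) (Fin r) ℝ) (V₀ V₁ : Matrix (Fin n) (Fin r) ℝ)
    (S₀ Sh₁ St₀ S₁ : Matrix (Fin r) (Fin r) ℝ)
    (hU₀ : U₀ᵀ * U₀ = 1) (hU₁ : U₁ᵀ * U₁ = 1)
    (hV₀ : V₀ᵀ * V₀ = 1) (hV₁ : V₁ᵀ * V₁ = 1)
    (hK : U₁ * Sh₁ = U₀ * S₀ + (A₁ - A₀) * V₀)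
    (hSt : St₀ = Sh₁ - U₁ᵀ * (A₁ - A₀) * V₀)
    (hL : V₁ * S₁ᵀ = V₀ * St₀ᵀ + (A₁ - A₀)ᵀ * U₁) :
    U₁ * S₁ * V₁ᵀ =
      U₀ * S₀ * V₀ᵀ + (A₁ - A₀) * (V₀ * V₀ᵀ)
        - U₁ * U₁ᵀ * (A₁ - A₀) * (V₀ * V₀ᵀ) + U₁ * U₁ᵀ * (A₁ - A₀) := by
  have hLT : S₁ * V₁ᵀ = St₀ * V₀ᵀ + U₁ᵀ * (A₁ - A₀) := by
    have := congrArg Matrix.transpose hL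
    simpa [Matrix.transpose_add, Matrix.transpose_mul] using this
  calc U₁ * S₁ * V₁ᵀ = U₁ * (S₁ * V₁ᵀ) := by rw [Matrix.mul_assoc]
    _ = U₁ * (St₀ * V₀ᵀ) + U₁ * (U₁ᵀ * (A₁ - A₀)) := by rw [hLT, Matrix.mul_add]
    _ = (U₁ * Sh₁) * V₀ᵀ - U₁ * (U₁ᵀ * (A₁ - A₀) * V₀) * V₀ᵀ
          + U₁ * U₁ᵀ * (A₁ - A₀) := by
        rw [hSt]; simp only [Matrix.mul_add, Matrix.add_mul, Matrix.sub_mul, Matrix.mul_sub, Matrix.mul_assoc]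
    _ = _ := by rw [hK]; simp only [Matrix.mul_add, Matrix.add_mul, Matrix.sub_mul, Matrix.mul_sub, Matrix.mul_assoc]
end
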